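/- arXiv:2012.04957 — 2 statements merged into one kernel-verified Lean document; each statement's English description precedes it below -/
import Mathlib

section
/- Let Z ~ N(0,1), ε, σ > 0, and ν ≥ 0 with ν ε²/σ² < 1/2. Then E[cosh^ν((ε/σ)Z)] ≤ exp(ν ε²/(2σ²) + (3/2) ν² ε⁴/σ⁴). -/
open MeasureTheory Real ProbabilityTheory
open scoped ENNReal NNReal

lemma integral_gaussianReal_std (g : ℝ → ℝ) :
    ∫ x, g x ∂(gaussianReal 0 1) = ∫ x, gaussianPDFReal 0 1 x * g x := by
  rw [gaussianReal_of_var_ne_zero _ one_ne_zero]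
  have h : (gaussianPDF 0 1)
      = fun x => ((Real.toNNReal (gaussianPDFReal 0 1 x) : ℝ≥0) : ℝ≥0∞) := by
    funext x; rfl
  rw [h, integral_withDensity_eq_integral_smul
    ((measurable_gaussianPDFReal 0 1).real_toNNReal) g]
  congr 1
  funext x
  rw [NNReal.smul_def, Real.coe_toNNReal _ (gaussianPDFReal_nonneg 0 1 x), smul_eq_mul]

lemma integrable_gaussianReal_std (g : ℝ → ℝ)
    (h : Integrable (fun x => gaussianPDFReal 0 1 x * g x) volume) :
    Integrable g (gaussianReal 0 1) := by
  rw [gaussianReal_of_var_ne_zero _ one_ne_zero]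
  have h2 : (gaussianPDF 0 1)
      = fun x => ((Real.toNNReal (gaussianPDFReal 0 1 x) : ℝ≥0) : ℝ≥0∞) := by
    funext x; rfl
  rw [h2, integrable_withDensity_iff_integrable_smul
    ((measurable_gaussianPDFReal 0 1).real_toNNReal)]
  convert h using 2 with x
  · rfl
  rw [NNReal.smul_def, Real.coe_toNNReal _ (gaussianPDFReal_nonneg 0 1 x), smul_eq_mul]

lemma pdf_mul_exp (c : ℝ) :
    (fun x : ℝ => gaussianPDFReal 0 1 x * Real.exp (c * x ^ 2)) =
      fun x => (Real.sqrt (2 * π))⁻¹ * Real.exp (-(1/2 - c) * x ^ 2) := by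
  funext x
  rw [gaussianPDFReal]
  push_cast
  rw [mul_assoc, ← Real.exp_add]
  ring_nf

lemma gauss_exp_sq_int (a : ℝ) (ha0 : 0 ≤ a) (ha : a < 1/2) :
    Integrable (fun z => Real.exp ((a/2) * z ^ 2)) (gaussianReal 0 1) ∧
    ∫ z, Real.exp ((a/2) * z ^ 2) ∂(gaussianReal 0 1)
      ≤ Real.exp (a/2 + (3/2) * a ^ 2) := by
  have hbpos : 0 < 1/2 - a/2 := by linarith
  constructor
  · apply integrable_gaussianReal_std
    rw [pdf_mul_exp]
    exact (integrable_exp_neg_mul_sq hbpos).const_mul _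
  have h3 : ∫ z, Real.exp ((a/2) * z ^ 2) ∂(gaussianReal 0 1)
      = (Real.sqrt (2 * π))⁻¹ * Real.sqrt (π / (1/2 - a/2)) := by
    rw [integral_gaussianReal_std, pdf_mul_exp, MeasureTheory.integral_const_mul,
      integral_gaussian]
  rw [h3]
  have hπ : (0:ℝ) < π := Real.pi_pos
  have h1a : 0 < 1 - a := by linarith
  have h4 : (Real.sqrt (2 * π))⁻¹ * Real.sqrt (π / (1/2 - a/2))
      = Real.sqrt ((1 - a)⁻¹) := by
    rw [← Real.sqrt_inv, ← Real.sqrt_mul (by positivity)]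
    congr 1
    field_simp
  rw [h4]
  have hkey : (1 - a)⁻¹ ≤ Real.exp (a + 3 * a ^ 2) := by
    rw [inv_eq_one_div, div_le_iff₀ h1a]
    have hle : 1 + (a + 3 * a ^ 2) ≤ Real.exp (a + 3 * a ^ 2) := by
      have := Real.add_one_le_exp (a + 3 * a ^ 2)
      linarith
    nlinarith [Real.exp_pos (a + 3 * a ^ 2)]
  have h5 : Real.sqrt ((1 - a)⁻¹) ≤ Real.sqrt (Real.exp (a + 3 * a ^ 2)) :=
    Real.sqrt_le_sqrt hkey
  refine h5.trans_eq ?_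
  rw [← Real.exp_half]
  congr 1
  ring

theorem gaussian_cosh_rpow_bound_nonneg (ε σ ν : ℝ) (hε : 0 < ε) (hσ : 0 < σ)
    (hν : 0 ≤ ν) (hcond : ν * ε ^ 2 / σ ^ 2 < 1/2) :
    ∫ z, (Real.cosh ((ε / σ) * z)) ^ ν ∂(gaussianReal 0 1)
      ≤ Real.exp (ν * ε ^ 2 / (2 * σ ^ 2) + (3/2) * ν ^ 2 * ε ^ 4 / σ ^ 4) := by
  have ha0 : 0 ≤ ν * ε ^ 2 / σ ^ 2 := by positivity
  obtain ⟨hint, hbound⟩ := gauss_exp_sq_int (ν * ε ^ 2 / σ ^ 2) ha0 hcond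
  have hσ' : σ ≠ 0 := ne_of_gt hσ
  have hpt : ∀ z : ℝ, (Real.cosh ((ε / σ) * z)) ^ ν
      ≤ Real.exp ((ν * ε ^ 2 / σ ^ 2 / 2) * z ^ 2) := by
    intro z
    have h1 : (Real.cosh ((ε / σ) * z)) ^ ν ≤ (Real.exp (((ε / σ) * z) ^ 2 / 2)) ^ ν :=
      Real.rpow_le_rpow (Real.cosh_pos _).le (Real.cosh_le_exp_half_sq _) hν
    refine h1.trans_eq ?_
    rw [← Real.exp_mul]
    congr 1
    field_simp
  have h2 : ∫ z, (Real.cosh ((ε / σ) * z)) ^ ν ∂(gaussianReal 0 1)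
      ≤ ∫ z, Real.exp ((ν * ε ^ 2 / σ ^ 2 / 2) * z ^ 2) ∂(gaussianReal 0 1) := by
    refine integral_mono_of_nonneg ?_ hint ?_
    · filter_upwards with z
      positivity
    · filter_upwards with z using hpt z
  refine h2.trans (hbound.trans_eq ?_)
  congr 1
  field_simp
end

section
/- Let Z ~ N(0,1), ε, σ > 0, and ν < 0 with |ν| ε²/σ² < 1/2. Then E[cosh^ν((ε/σ)Z)] ≤ exp(ν ε²/(2σ²) + (3/2) ν² ε⁴/σ⁴ − (3/2) ν ε⁴/σ⁴). -/
open MeasureTheory Real ProbabilityTheory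

lemma aux_cosh_lb (x : ℝ) : 1 + x ^ 2 / 2 ≤ Real.cosh x := by
  have h := Real.hasSum_cosh x
  have h01 : ∑ n ∈ Finset.range 2, x ^ (2 * n) / ((2 * n).factorial : ℝ) ≤ Real.cosh x :=
    sum_le_hasSum _ (fun i _ => by
      have : (0:ℝ) < ((2 * i).factorial : ℝ) := by positivity
      have hx : 0 ≤ x ^ (2 * i) := by
        rw [pow_mul]; positivity
      positivity) h
  simp [Finset.sum_range_succ] at h01
  norm_num at h01
  linarith

lemma aux_exp_le (v : ℝ) (hv : 0 ≤ v) : Real.exp v ≤ 1 + v * Real.exp v := by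
  have h := Real.add_one_le_exp (-v)
  have h2 : Real.exp v * (-v + 1) ≤ Real.exp v * Real.exp (-v) :=
    mul_le_mul_of_nonneg_left h (Real.exp_pos v).le
  rw [← Real.exp_add] at h2
  simp at h2
  nlinarith [Real.exp_pos v]

-- log(1+y) ≥ y - y² for y ≥ 0
lemma aux_log_lb (y : ℝ) (hy : 0 ≤ y) : y - y ^ 2 ≤ Real.log (1 + y) := by
  rw [← Real.exp_le_exp, Real.exp_log (by positivity)]
  have e1 : -(y - y ^ 2) + 1 ≤ Real.exp (-(y - y ^ 2)) := Real.add_one_le_exp _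
  have e2 : Real.exp (y - y ^ 2) * Real.exp (-(y - y ^ 2)) = 1 := by
    rw [← Real.exp_add]; simp
  have epos := Real.exp_pos (y - y ^ 2)
  have hq : 0 < 1 - y + y ^ 2 := by nlinarith
  have h3 : Real.exp (y - y ^ 2) * (1 - y + y ^ 2) ≤ 1 := by
    nlinarith [mul_le_mul_of_nonneg_left e1 epos.le]
  have h4 : (1 : ℝ) ≤ (1 + y) * (1 - y + y ^ 2) := by nlinarith
  nlinarith

-- pointwise bound
lemma aux_ptwise (ν x : ℝ) (hν : ν < 0) :
    Real.cosh x ^ ν ≤ Real.exp (ν * x ^ 2 / 2) + (-ν) * x ^ 4 / 4 := by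
  have hc : (0:ℝ) < Real.cosh x := Real.cosh_pos x
  rw [Real.rpow_def_of_pos hc]
  set L := Real.log (Real.cosh x) with hLdef
  have hL0 : 0 ≤ L := Real.log_nonneg (Real.one_le_cosh x)
  have hLub : L ≤ x ^ 2 / 2 := by
    calc L ≤ Real.log (Real.exp (x ^ 2 / 2)) :=
          Real.log_le_log hc (Real.cosh_le_exp_half_sq x)
      _ = x ^ 2 / 2 := Real.log_exp _
  have hLlb : x ^ 2 / 2 - x ^ 4 / 4 ≤ L := by
    have h1 : Real.log (1 + x ^ 2 / 2) ≤ L :=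
      Real.log_le_log (by positivity) (aux_cosh_lb x)
    have h2 : x ^ 2 / 2 - (x ^ 2 / 2) ^ 2 ≤ Real.log (1 + x ^ 2 / 2) :=
      aux_log_lb _ (by positivity)
    nlinarith
  set u := x ^ 2 / 2 - L with hudef
  have hu0 : 0 ≤ u := by simp [hudef]; linarith
  have hu4 : u ≤ x ^ 4 / 4 := by simp [hudef]; linarith
  have hu2 : u ≤ x ^ 2 / 2 := by simp [hudef]; linarith
  have hsplit : ν * L = ν * (x ^ 2 / 2) + (-ν) * u := by rw [hudef]; ring
  rw [show L * ν = ν * L from mul_comm _ _, hsplit, Real.exp_add]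
  have key : Real.exp ((-ν) * u) ≤ 1 + ((-ν) * u) * Real.exp ((-ν) * u) :=
    aux_exp_le _ (by nlinarith)
  have h5 : ((-ν) * u) * Real.exp ((-ν) * u) ≤ ((-ν) * (x ^ 4 / 4)) * Real.exp ((-ν) * (x ^ 2 / 2)) := by
    apply mul_le_mul
    · nlinarith
    · exact Real.exp_le_exp.2 (by nlinarith)
    · positivity
    · exact mul_nonneg (by linarith) (by positivity)
  have epos := Real.exp_pos (ν * (x ^ 2 / 2))
  have hcancel : Real.exp (ν * (x ^ 2 / 2)) * Real.exp ((-ν) * (x ^ 2 / 2)) = 1 := by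
    rw [← Real.exp_add]; simp
  calc Real.exp (ν * (x ^ 2 / 2)) * Real.exp ((-ν) * u)
      ≤ Real.exp (ν * (x ^ 2 / 2)) * (1 + ((-ν) * (x ^ 4 / 4)) * Real.exp ((-ν) * (x ^ 2 / 2))) := by
        exact mul_le_mul_of_nonneg_left (key.trans (by linarith [h5])) epos.le
    _ = Real.exp (ν * (x ^ 2 / 2)) + ((-ν) * (x ^ 4 / 4)) *
          (Real.exp (ν * (x ^ 2 / 2)) * Real.exp ((-ν) * (x ^ 2 / 2))) := by ring
    _ = Real.exp (ν * x ^ 2 / 2) + (-ν) * x ^ 4 / 4 := by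
        rw [hcancel]; ring_nf
  
-- final scalar inequality
lemma aux_final (s B : ℝ) (hs0 : 0 ≤ s) (hs : s ≤ 1/2) (hB : 0 ≤ B) :
    (Real.sqrt (1 + s))⁻¹ + (3/4) * B ≤ Real.exp (-s/2 + (3/2) * s ^ 2 + (3/2) * B) := by
  have h1 : Real.exp (s - 2 * s ^ 2) ≤ 1 + s := by
    have e1 : -(s - 2 * s ^ 2) + 1 ≤ Real.exp (-(s - 2 * s ^ 2)) := Real.add_one_le_exp _
    have e2 : Real.exp (s - 2 * s ^ 2) * Real.exp (-(s - 2 * s ^ 2)) = 1 := by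
      rw [← Real.exp_add]; simp
    have epos := Real.exp_pos (s - 2 * s ^ 2)
    have hq : 0 < 1 - s + 2 * s ^ 2 := by nlinarith
    have h3 : Real.exp (s - 2 * s ^ 2) * (1 - s + 2 * s ^ 2) ≤ 1 := by
      nlinarith [mul_le_mul_of_nonneg_left e1 epos.le]
    nlinarith
  have h2 : Real.exp (s/2 - s ^ 2) ≤ Real.sqrt (1 + s) := by
    rw [show s/2 - s ^ 2 = (s - 2 * s ^ 2)/2 by ring, Real.exp_half]
    exact Real.sqrt_le_sqrt h1
  have h3 : (Real.sqrt (1 + s))⁻¹ ≤ Real.exp (-s/2 + s ^ 2) := by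
    rw [show -s/2 + s ^ 2 = -(s/2 - s ^ 2) by ring, Real.exp_neg]
    exact inv_anti₀ (Real.exp_pos _) h2
  have h4 : (3:ℝ)/4 ≤ Real.exp (-s/2 + s ^ 2) := by
    have := Real.add_one_le_exp (-s/2 + s ^ 2)
    nlinarith
  have h5 : Real.exp (-s/2 + (3/2) * s ^ 2 + (3/2) * B)
      = Real.exp (-s/2 + s ^ 2) * Real.exp ((1/2) * s ^ 2 + (3/2) * B) := by
    rw [← Real.exp_add]; ring_nf
  have h6 : 1 + ((1/2) * s ^ 2 + (3/2) * B) ≤ Real.exp ((1/2) * s ^ 2 + (3/2) * B) := by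
    have := Real.add_one_le_exp ((1/2) * s ^ 2 + (3/2) * B)
    linarith
  have epos := Real.exp_pos (-s/2 + s ^ 2)
  rw [h5]
  nlinarith [mul_le_mul_of_nonneg_left h6 epos.le]

-- integrability of z^n * exp(-b z^2)
lemma aux_int_pow (n : ℕ) {b : ℝ} (hb : 0 < b) :
    Integrable (fun z : ℝ => z ^ n * Real.exp (-b * z ^ 2)) := by
  have h := integrable_rpow_mul_exp_neg_mul_sq hb (s := (n : ℝ)) (by
    have : (0:ℝ) ≤ (n:ℝ) := Nat.cast_nonneg n
    linarith)
  refine h.congr (Filter.Eventually.of_forall fun z => ?_)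
  simp only [Real.rpow_natCast]

lemma aux_hasDerivAt_negexp (z : ℝ) :
    HasDerivAt (fun z : ℝ => -Real.exp (-(1/2) * z ^ 2)) (z * Real.exp (-(1/2) * z ^ 2)) z := by
  have h1 : HasDerivAt (fun z : ℝ => -(1/2) * z ^ 2) (-(1/2) * (2 * z)) z := by
    exact (hasDerivAt_pow 2 z).const_mul _ |>.congr_deriv (by ring_nf)
  have h2 := (h1.exp).neg
  refine h2.congr_deriv ?_
  ring

lemma aux_int_sq_val :
    ∫ z : ℝ, z ^ 2 * Real.exp (-(1/2) * z ^ 2) = Real.sqrt (2 * π) := by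
  have hu : ∀ z : ℝ, HasDerivAt (fun z : ℝ => z) 1 z := fun z => hasDerivAt_id z
  have huv' : Integrable ((fun z : ℝ => z) * fun z => z * Real.exp (-(1/2) * z ^ 2)) := by
    refine (aux_int_pow 2 (by norm_num : (0:ℝ) < 1/2)).congr
      (Filter.Eventually.of_forall fun z => ?_)
    simp only [Pi.mul_apply]; ring
  have hu'v : Integrable ((fun _ : ℝ => (1:ℝ)) * fun z => -Real.exp (-(1/2) * z ^ 2)) := by
    refine ((integrable_exp_neg_mul_sq (by norm_num : (0:ℝ) < 1/2)).neg.congr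
      (Filter.Eventually.of_forall fun z => ?_))
    simp [Pi.mul_apply]
  have huv : Integrable ((fun z : ℝ => z) * fun z => -Real.exp (-(1/2) * z ^ 2)) := by
    refine ((aux_int_pow 1 (by norm_num : (0:ℝ) < 1/2)).neg.congr
      (Filter.Eventually.of_forall fun z => ?_))
    simp [Pi.mul_apply]; try ring
  have key := integral_mul_deriv_eq_deriv_mul_of_integrable (fun z _ => hu z)
    (fun z _ => aux_hasDerivAt_negexp z) huv' hu'v huv
  have h1 : ∫ z : ℝ, z ^ 2 * Real.exp (-(1/2) * z ^ 2)
      = ∫ z : ℝ, z * (z * Real.exp (-(1/2) * z ^ 2)) := by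
    congr 1; funext z; ring
  have h2 : (∫ z : ℝ, (1:ℝ) * -Real.exp (-(1/2) * z ^ 2))
      = -∫ z : ℝ, Real.exp (-(1/2) * z ^ 2) := by
    rw [← integral_neg]; congr 1; funext z; ring
  rw [h1, key, h2, neg_neg, integral_gaussian]
  rw [show π / (1/2) = 2 * π by ring]

lemma aux_int_quartic_val :
    ∫ z : ℝ, z ^ 4 * Real.exp (-(1/2) * z ^ 2) = 3 * Real.sqrt (2 * π) := by
  have hu : ∀ z : ℝ, HasDerivAt (fun z : ℝ => z ^ 3) (3 * z ^ 2) z := fun z => by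
    simpa using hasDerivAt_pow 3 z
  have huv' : Integrable ((fun z : ℝ => z ^ 3) * fun z => z * Real.exp (-(1/2) * z ^ 2)) := by
    refine (aux_int_pow 4 (by norm_num : (0:ℝ) < 1/2)).congr
      (Filter.Eventually.of_forall fun z => ?_)
    simp [Pi.mul_apply]; try ring
  have hu'v : Integrable ((fun z : ℝ => 3 * z ^ 2) * fun z => -Real.exp (-(1/2) * z ^ 2)) := by
    refine (((aux_int_pow 2 (by norm_num : (0:ℝ) < 1/2)).const_mul 3).neg.congr
      (Filter.Eventually.of_forall fun z => ?_))
    simp [Pi.mul_apply]; try ring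
  have huv : Integrable ((fun z : ℝ => z ^ 3) * fun z => -Real.exp (-(1/2) * z ^ 2)) := by
    refine ((aux_int_pow 3 (by norm_num : (0:ℝ) < 1/2)).neg.congr
      (Filter.Eventually.of_forall fun z => ?_))
    simp [Pi.mul_apply]; try ring
  have key := integral_mul_deriv_eq_deriv_mul_of_integrable (fun z _ => hu z)
    (fun z _ => aux_hasDerivAt_negexp z) huv' hu'v huv
  have h1 : ∫ z : ℝ, z ^ 4 * Real.exp (-(1/2) * z ^ 2)
      = ∫ z : ℝ, z ^ 3 * (z * Real.exp (-(1/2) * z ^ 2)) := by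
    congr 1; funext z; ring
  have h2 : (∫ z : ℝ, 3 * z ^ 2 * -Real.exp (-(1/2) * z ^ 2))
      = -(3 * ∫ z : ℝ, z ^ 2 * Real.exp (-(1/2) * z ^ 2)) := by
    rw [← MeasureTheory.integral_const_mul, ← integral_neg]; congr 1; funext z; ring
  rw [h1, key, h2, neg_neg, aux_int_sq_val]

lemma aux_pdf (z : ℝ) :
    gaussianPDFReal 0 1 z = (Real.sqrt (2 * π))⁻¹ * Real.exp (-(1/2) * z ^ 2) := by
  rw [gaussianPDFReal]
  simp only [NNReal.coe_one, mul_one, sub_zero, one_div]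
  congr 1
  ring

lemma aux_conv (f : ℝ → ℝ) :
    ∫ z, f z ∂(gaussianReal 0 1) = ∫ z, gaussianPDFReal 0 1 z * f z := by
  rw [gaussianReal_of_var_ne_zero 0 one_ne_zero]
  have h : gaussianPDF 0 1 = fun x => ((Real.toNNReal (gaussianPDFReal 0 1 x) : NNReal) : ENNReal) := by
    funext x; rfl
  rw [h, integral_withDensity_eq_integral_smul ((measurable_gaussianPDFReal 0 1).real_toNNReal)]
  congr 1; funext x
  simp [NNReal.smul_def, Real.coe_toNNReal _ (gaussianPDFReal_nonneg 0 1 x)]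

lemma aux_exp_val {s : ℝ} (hs : 0 ≤ s) :
    ∫ z : ℝ, (Real.sqrt (2 * π))⁻¹ * Real.exp (-((1 + s)/2) * z ^ 2)
      = (Real.sqrt (1 + s))⁻¹ := by
  rw [MeasureTheory.integral_const_mul, integral_gaussian]
  have h1 : π / ((1 + s)/2) = 2 * π / (1 + s) := by
    rw [div_div_eq_mul_div]; ring
  have h2 : Real.sqrt (2 * π / (1 + s)) = Real.sqrt (2 * π) / Real.sqrt (1 + s) :=
    Real.sqrt_div (by positivity) _
  have h3 : Real.sqrt (2 * π) ≠ 0 := by positivity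
  rw [h1, h2]
  field_simp

theorem gaussian_cosh_rpow_bound_neg (ε σ ν : ℝ) (hε : 0 < ε) (hσ : 0 < σ)
    (hν : ν < 0) (hcond : |ν| * ε ^ 2 / σ ^ 2 < 1/2) :
    ∫ z, (Real.cosh ((ε / σ) * z)) ^ ν ∂(gaussianReal 0 1)
      ≤ Real.exp (ν * ε ^ 2 / (2 * σ ^ 2) + (3/2) * ν ^ 2 * ε ^ 4 / σ ^ 4
          - (3/2) * ν * ε ^ 4 / σ ^ 4) := by
  have hr : 0 < ε / σ := div_pos hε hσ
  set r : ℝ := ε / σ with hrdef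
  have ha : 0 < -ν := neg_pos.2 hν
  set s : ℝ := (-ν) * r ^ 2 with hsdef
  have hs0 : 0 < s := by positivity
  have hs2 : s < 1/2 := by
    have habs : |ν| = -ν := abs_of_neg hν
    have : |ν| * ε ^ 2 / σ ^ 2 = s := by
      rw [habs, hsdef, hrdef, div_pow, mul_div_assoc]
    linarith [hcond, this.symm.le]
  have hc : (0:ℝ) < (Real.sqrt (2 * π))⁻¹ := by positivity
  set c : ℝ := (Real.sqrt (2 * π))⁻¹ with hcdef
  -- convert to volume integral
  rw [aux_conv (fun z => Real.cosh (r * z) ^ ν)]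
  set G1 : ℝ → ℝ := fun z => c * Real.exp (-((1 + s)/2) * z ^ 2) with hG1def
  set G2 : ℝ → ℝ := fun z => (c * ((-ν) * r ^ 4 / 4)) * (z ^ 4 * Real.exp (-(1/2) * z ^ 2))
    with hG2def
  have hG1 : Integrable G1 := (integrable_exp_neg_mul_sq (by positivity)).const_mul c
  have hG2 : Integrable G2 := (aux_int_pow 4 (by norm_num : (0:ℝ) < 1/2)).const_mul _
  have hpt : ∀ z, gaussianPDFReal 0 1 z * Real.cosh (r * z) ^ ν ≤ G1 z + G2 z := by
    intro z
    rw [aux_pdf]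
    have h := aux_ptwise ν (r * z) hν
    have hg0 : (0:ℝ) ≤ c * Real.exp (-(1/2) * z ^ 2) := by positivity
    calc c * Real.exp (-(1/2) * z ^ 2) * Real.cosh (r * z) ^ ν
        ≤ c * Real.exp (-(1/2) * z ^ 2) *
            (Real.exp (ν * (r * z) ^ 2 / 2) + (-ν) * (r * z) ^ 4 / 4) :=
          mul_le_mul_of_nonneg_left h hg0
      _ = c * (Real.exp (-(1/2) * z ^ 2) * Real.exp (ν * (r * z) ^ 2 / 2))
            + (c * ((-ν) * r ^ 4 / 4)) * (z ^ 4 * Real.exp (-(1/2) * z ^ 2)) := by ring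
      _ = G1 z + G2 z := by
          rw [hG1def, hG2def, ← Real.exp_add]
          have : -(1/2) * z ^ 2 + ν * (r * z) ^ 2 / 2 = -((1 + s)/2) * z ^ 2 := by
            rw [hsdef]; ring
          rw [this]
  have hnn : ∀ z, 0 ≤ gaussianPDFReal 0 1 z * Real.cosh (r * z) ^ ν := fun z =>
    mul_nonneg (gaussianPDFReal_nonneg 0 1 z)
      (Real.rpow_pos_of_pos (Real.cosh_pos _) ν).le
  have hmono : (∫ z, gaussianPDFReal 0 1 z * Real.cosh (r * z) ^ ν)
      ≤ ∫ z, (G1 z + G2 z) :=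
    integral_mono_of_nonneg (Filter.Eventually.of_forall hnn) (hG1.add hG2)
      (Filter.Eventually.of_forall hpt)
  have hval : (∫ z, (G1 z + G2 z)) = (Real.sqrt (1 + s))⁻¹ + (3/4) * ((-ν) * r ^ 4) := by
    rw [integral_add hG1 hG2]
    have v1 : ∫ z, G1 z = (Real.sqrt (1 + s))⁻¹ := aux_exp_val hs0.le
    have v2 : ∫ z, G2 z = (3/4) * ((-ν) * r ^ 4) := by
      rw [hG2def]
      rw [MeasureTheory.integral_const_mul, aux_int_quartic_val]
      have hsq : Real.sqrt (2 * π) ≠ 0 := by positivity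
      rw [hcdef]
      field_simp
    rw [v1, v2]
  have hfin := aux_final s ((-ν) * r ^ 4) hs0.le hs2.le (by positivity)
  have hexp : -s/2 + (3/2) * s ^ 2 + (3/2) * ((-ν) * r ^ 4)
      = ν * ε ^ 2 / (2 * σ ^ 2) + (3/2) * ν ^ 2 * ε ^ 4 / σ ^ 4
          - (3/2) * ν * ε ^ 4 / σ ^ 4 := by
    rw [hsdef, hrdef]
    field_simp
    ring
  calc (∫ z, gaussianPDFReal 0 1 z * Real.cosh (r * z) ^ ν)
      ≤ ∫ z, (G1 z + G2 z) := hmono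
    _ = (Real.sqrt (1 + s))⁻¹ + (3/4) * ((-ν) * r ^ 4) := hval
    _ ≤ Real.exp (-s/2 + (3/2) * s ^ 2 + (3/2) * ((-ν) * r ^ 4)) := hfin
    _ = _ := by rw [hexp]
end
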